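/- arXiv:1908.06189 — 10 statements merged into one kernel-verified Lean document; each statement's English description precedes it below -/
import Mathlib

section
/- For a path graph P_n on n vertices with n ≥ 1 and integers t ≥ r ≥ 1, the (t,r) broadcast domination number of P_n equals ⌈(n + r - 1)/(2t - r)⌉. -/
private lemma natAbs_cases (x : ℤ) : ((x.natAbs : ℤ) = x ∨ (x.natAbs : ℤ) = -x) := by
  rcases Int.natAbs_eq x with h | h
  · left; omega
  · right; omega

private lemma natAbs_sub_nat (x y : ℕ) : ((x:ℤ) - (y:ℤ)).natAbs = x - y + (y - x) := by
  omega

/-- Lower bound: if a finite set of distinct integer towers gives every point of `[a, b]`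
signal at least `r`, then `b - a + r ≤ card * (2t - r)`. -/
private lemma lb_aux (t r : ℕ) (hr : 1 ≤ r) (htr : r ≤ t) :
    ∀ m : ℕ, ∀ T : Finset ℤ, T.card = m → ∀ a b : ℤ, a ≤ b →
      (∀ x : ℤ, a ≤ x → x ≤ b → r ≤ ∑ w ∈ T, (t - (x - w).natAbs)) →
      b - a + (r : ℤ) ≤ (m : ℤ) * (2 * t - r) := by
  intro m
  induction m using Nat.strong_induction_on with
  | _ m ih =>
    intro T hT a b hab H
    classical
    set C : Finset ℤ := T.filter (fun w => w ≤ a + t - 1) with hCdef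
    have hCsub : C ⊆ T := Finset.filter_subset _ _
    have hsplit : ∑ w ∈ C, (t - (a - w).natAbs)
        + ∑ w ∈ T.filter (fun w => ¬ w ≤ a + t - 1), (t - (a - w).natAbs)
        = ∑ w ∈ T, (t - (a - w).natAbs) := by
      rw [hCdef]
      exact Finset.sum_filter_add_sum_filter_not T _ _
    have hz : ∑ w ∈ T.filter (fun w => ¬ w ≤ a + t - 1), (t - (a - w).natAbs) = 0 := by
      apply Finset.sum_eq_zero
      intro w hw
      simp only [Finset.mem_filter] at hw
      have := natAbs_cases (a - w)
      omega
    have hfa : (r:ℕ) ≤ ∑ w ∈ C, (t - (a - w).natAbs) := by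
      have := H a le_rfl hab; omega
    have hCne : C.Nonempty := by
      rcases Finset.eq_empty_or_nonempty C with h | h
      · rw [h, Finset.sum_empty] at hfa; omega
      · exact h
    obtain ⟨ws, hwsmem, hwsmax⟩ : ∃ ws ∈ C, ∀ w ∈ C, w ≤ ws :=
      ⟨C.max' hCne, C.max'_mem hCne, fun w hw => C.le_max' w hw⟩
    have hws_le : ws ≤ a + t - 1 := by
      rw [hCdef] at hwsmem
      exact (Finset.mem_filter.mp hwsmem).2
    have hws_ge : a - t + 1 ≤ ws := by
      by_contra hcon
      push_neg at hcon
      have hzz : ∑ w ∈ C, (t - (a - w).natAbs) = 0 := by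
        apply Finset.sum_eq_zero
        intro w hw
        have h1 : w ≤ ws := hwsmax w hw
        have := natAbs_cases (a - w)
        omega
      omega
    have hjm : C.card ≤ m := hT ▸ Finset.card_le_card hCsub
    have hj1 : 1 ≤ C.card := Finset.card_pos.mpr hCne
    have htrz : (r:ℤ) ≤ (t:ℤ) := by exact_mod_cast htr
    have hrz : (1:ℤ) ≤ (r:ℤ) := by exact_mod_cast hr
    have key1 : ws + (t:ℤ) - a ≤ (C.card : ℤ) * (2 * t - r) := by
      rcases eq_or_lt_of_le hj1 with hj | hj
      · obtain ⟨c, hc⟩ := Finset.card_eq_one.mp hj.symm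
        have hwsc : ws = c := by
          have h1 : ws ∈ ({c} : Finset ℤ) := hc ▸ hwsmem
          exact Finset.mem_singleton.mp h1
        rw [hc, Finset.sum_singleton] at hfa
        have := natAbs_cases (a - c)
        rw [← hj]
        push_cast
        omega
      · have h2 : (2:ℤ) ≤ (C.card : ℤ) := by exact_mod_cast hj
        have hd0 : (0:ℤ) ≤ 2 * t - r := by omega
        have hh : (2:ℤ) * (2 * t - r) ≤ (C.card : ℤ) * (2 * t - r) :=
          mul_le_mul_of_nonneg_right h2 hd0
        linarith
    by_cases hball : ws + (t:ℤ) ≤ b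
    · -- main case: apply the induction hypothesis to T \ C on [ws + t, b]
      have hcard' : (T \ C).card = m - C.card := by
        rw [Finset.card_sdiff_of_subset hCsub, hT]
      have hmlt : m - C.card < m := by omega
      have hcov' : ∀ x : ℤ, ws + t ≤ x → x ≤ b →
          r ≤ ∑ w ∈ T \ C, (t - (x - w).natAbs) := by
        intro x hx1 hx2
        have hax : a ≤ x := by omega
        have hsum : ∑ w ∈ T \ C, (t - (x - w).natAbs) + ∑ w ∈ C, (t - (x - w).natAbs)
            = ∑ w ∈ T, (t - (x - w).natAbs) := Finset.sum_sdiff hCsub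
        have hCz : ∑ w ∈ C, (t - (x - w).natAbs) = 0 := by
          apply Finset.sum_eq_zero
          intro w hw
          have hwle : w ≤ ws := hwsmax w hw
          have := natAbs_cases (x - w)
          omega
        have := H x hax hx2
        omega
      have hIH := ih (m - C.card) hmlt (T \ C) hcard' (ws + t) b hball hcov'
      have hcast : ((m - C.card : ℕ) : ℤ) = (m : ℤ) - C.card := by
        push_cast [Nat.cast_sub hjm]; ring
      rw [hcast] at hIH
      nlinarith [key1, hIH]
    · -- endgame: b ≤ ws + t - 1
      push_neg at hball
      have hfb := H b hab le_rfl
      rcases Nat.lt_or_ge m 3 with hm3 | hm3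
      · have hm1 : 1 ≤ m := le_trans hj1 hjm
        interval_cases m
        · -- m = 1, so C = T = {c}
          have hCT : C = T := Finset.eq_of_subset_of_card_le hCsub (by omega)
          obtain ⟨c, hc⟩ := Finset.card_eq_one.mp hT
          rw [hCT, hc, Finset.sum_singleton] at hfa
          rw [hc, Finset.sum_singleton] at hfb
          have h1 := natAbs_cases (a - c)
          have h2 := natAbs_cases (b - c)
          push_cast
          omega
        · -- m = 2
          rcases eq_or_lt_of_le hj1 with hj | hj
          · obtain ⟨c, hc⟩ := Finset.card_eq_one.mp hj.symm
            have hwsc : ws = c := by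
              have h1 : ws ∈ ({c} : Finset ℤ) := hc ▸ hwsmem
              exact Finset.mem_singleton.mp h1
            rw [hc, Finset.sum_singleton] at hfa
            have h1 := natAbs_cases (a - c)
            push_cast
            omega
          · have hCT : C = T := Finset.eq_of_subset_of_card_le hCsub (by omega)
            obtain ⟨w1, w2, hne, hTeq⟩ := Finset.card_eq_two.mp hT
            have hw1C : w1 ∈ C := by rw [hCT, hTeq]; simp
            have hw2C : w2 ∈ C := by rw [hCT, hTeq]; simp
            have hw1le : w1 ≤ a + t - 1 := by
              rw [hCdef] at hw1C; exact (Finset.mem_filter.mp hw1C).2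
            have hw2le : w2 ≤ a + t - 1 := by
              rw [hCdef] at hw2C; exact (Finset.mem_filter.mp hw2C).2
            have hwsor : ws = w1 ∨ ws = w2 := by
              have h1 : ws ∈ T := hCsub hwsmem
              rw [hTeq] at h1
              simpa using h1
            have hfa2 : (r:ℕ) ≤ (t - (a - w1).natAbs) + (t - (a - w2).natAbs) := by
              rw [hCT, hTeq] at hfa
              rwa [Finset.sum_pair hne] at hfa
            have hfb2 : (r:ℕ) ≤ (t - (b - w1).natAbs) + (t - (b - w2).natAbs) := by
              rw [hTeq] at hfb
              rwa [Finset.sum_pair hne] at hfb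
            have h1 := natAbs_cases (a - w1)
            have h2 := natAbs_cases (a - w2)
            have h3 := natAbs_cases (b - w1)
            have h4 := natAbs_cases (b - w2)
            push_cast
            omega
      · -- m ≥ 3, crude bound
        have h3 : (3:ℤ) ≤ (m:ℤ) := by exact_mod_cast hm3
        have hd0 : (0:ℤ) ≤ 2 * t - r := by omega
        have hh : (3:ℤ) * (2 * t - r) ≤ (m:ℤ) * (2 * t - r) :=
          mul_le_mul_of_nonneg_right h3 hd0
        linarith

private def canonPos (n t r B : ℕ) (hn : 1 ≤ n) (i : ℕ) : Fin n :=
  ⟨min (t - r + i * B) (n - 1), by omega⟩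

/-- The (t,r) broadcast domination number of the path on n vertices
equals ⌈(n + r - 1)/(2t - r)⌉ (written with natural-number ceiling division). -/
theorem path_broadcast_domination_number (n t r : ℕ) (hn : 1 ≤ n) (hr : 1 ≤ r) (htr : r ≤ t) :
    sInf {k : ℕ | ∃ T : Finset (Fin n), T.card = k ∧
        ∀ v : Fin n, r ≤ ∑ w ∈ T, (t - ((v.val : ℤ) - (w.val : ℤ)).natAbs)} =
      (n + r - 1 + (2 * t - r) - 1) / (2 * t - r) := by
  classical
  set B := 2 * t - r with hBdef
  have hB0 : 0 < B := by omega
  set K := (n + r - 1 + B - 1) / B with hKdef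
  have hdm : B * K + (n + r - 1 + B - 1) % B = n + r - 1 + B - 1 := by
    rw [hKdef]; exact Nat.div_add_mod _ _
  have hmod := Nat.mod_lt (n + r - 1 + B - 1) hB0
  have hKB : n + r - 1 ≤ K * B := by
    have hc : K * B = B * K := Nat.mul_comm _ _
    omega
  have hnr : n + r ≤ n * r + 1 := by
    have hn' : (1:ℤ) ≤ (n:ℤ) := by exact_mod_cast hn
    have hr' : (1:ℤ) ≤ (r:ℤ) := by exact_mod_cast hr
    have hz : (n:ℤ) + r ≤ n * r + 1 := by
      nlinarith [mul_nonneg (sub_nonneg.mpr hn') (sub_nonneg.mpr hr')]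
    exact_mod_cast hz
  have hnB : n * r ≤ n * B := Nat.mul_le_mul_left n (by omega)
  have hKn : K ≤ n := by
    have h1 : K < n + 1 := by
      rw [hKdef, Nat.div_lt_iff_lt_mul hB0]
      have hexp : (n + 1) * B = n * B + B := by ring
      omega
    omega
  -- membership: the canonical configuration, padded to exactly K towers
  set T0 : Finset (Fin n) := (Finset.range K).image (canonPos n t r B hn) with hT0
  have hT0card : T0.card ≤ K := le_trans (Finset.card_image_le) (by simp)
  have hcov : ∀ v : Fin n, r ≤ ∑ w ∈ T0, (t - ((v.val : ℤ) - (w.val : ℤ)).natAbs) := by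
    intro v
    have hx : v.val ≤ n - 1 := by have := v.isLt; omega
    have hdm2 : B * (v.val / B) + v.val % B = v.val := Nat.div_add_mod _ _
    have hmod2 := Nat.mod_lt v.val hB0
    set i := v.val / B with hidef
    have hiK : i < K := by
      by_contra hcon
      push_neg at hcon
      have h1 : B * K ≤ B * i := Nat.mul_le_mul_left B hcon
      have hc : K * B = B * K := Nat.mul_comm _ _
      omega
    have hv1 : (canonPos n t r B hn i).val = min (t - r + i * B) (n - 1) := rfl
    have hv2 : (canonPos n t r B hn (i+1)).val = min (t - r + (i+1) * B) (n - 1) := rfl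
    have hmc : i * B = B * i := Nat.mul_comm _ _
    have hmc2 : (i+1) * B = B * i + B := by ring
    by_cases hcase : v.val ≤ 2 * (t - r) + B * i
    · -- a single tower suffices
      have hmem : canonPos n t r B hn i ∈ T0 := by
        rw [hT0]; exact Finset.mem_image_of_mem _ (Finset.mem_range.mpr hiK)
      have hterm : r ≤ t - ((v.val : ℤ) - ((canonPos n t r B hn i).val : ℤ)).natAbs := by
        rw [natAbs_sub_nat, hv1]
        omega
      exact le_trans hterm (Finset.single_le_sum
        (f := fun w : Fin n => t - ((v.val : ℤ) - (w.val : ℤ)).natAbs)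
        (fun _ _ => Nat.zero_le _) hmem)
    · -- a pair of consecutive towers
      push_neg at hcase
      have hi1K : i + 1 < K := by
        by_contra hcon
        push_neg at hcon
        have h1 : B * K ≤ B * (i + 1) := Nat.mul_le_mul_left B hcon
        have hc : K * B = B * K := Nat.mul_comm _ _
        have hexp : B * (i + 1) = B * i + B := by ring
        omega
      have hmem1 : canonPos n t r B hn i ∈ T0 := by
        rw [hT0]; exact Finset.mem_image_of_mem _ (Finset.mem_range.mpr hiK)
      have hmem2 : canonPos n t r B hn (i+1) ∈ T0 := by
        rw [hT0]; exact Finset.mem_image_of_mem _ (Finset.mem_range.mpr hi1K)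
      have hne : canonPos n t r B hn i ≠ canonPos n t r B hn (i+1) := by
        intro h
        have h2 := congrArg Fin.val h
        rw [hv1, hv2] at h2
        omega
      have hpair : ({canonPos n t r B hn i, canonPos n t r B hn (i+1)} : Finset (Fin n)) ⊆ T0 := by
        intro w hw
        rcases Finset.mem_insert.mp hw with h | h
        · rwa [h]
        · rw [Finset.mem_singleton.mp h]; exact hmem2
      have hterm : r ≤ (t - ((v.val : ℤ) - ((canonPos n t r B hn i).val : ℤ)).natAbs)
          + (t - ((v.val : ℤ) - ((canonPos n t r B hn (i+1)).val : ℤ)).natAbs) := by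
        rw [natAbs_sub_nat, natAbs_sub_nat, hv1, hv2]
        omega
      have hps : ∑ w ∈ ({canonPos n t r B hn i, canonPos n t r B hn (i+1)} : Finset (Fin n)),
            (t - ((v.val : ℤ) - ((w.val : ℕ) : ℤ)).natAbs)
          = (t - ((v.val : ℤ) - ((canonPos n t r B hn i).val : ℤ)).natAbs)
          + (t - ((v.val : ℤ) - ((canonPos n t r B hn (i+1)).val : ℤ)).natAbs) :=
        Finset.sum_pair hne
      refine le_trans hterm ?_
      rw [← hps]
      exact Finset.sum_le_sum_of_subset hpair
  obtain ⟨T1, hsub, hcard⟩ := Finset.exists_superset_card_eq hT0card (by simpa using hKn)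
  have hmemK : K ∈ {k : ℕ | ∃ T : Finset (Fin n), T.card = k ∧
      ∀ v : Fin n, r ≤ ∑ w ∈ T, (t - ((v.val : ℤ) - (w.val : ℤ)).natAbs)} :=
    ⟨T1, hcard, fun v => le_trans (hcov v) (Finset.sum_le_sum_of_subset hsub)⟩
  -- lower bound for every member of the set
  have hlow : ∀ k ∈ {k : ℕ | ∃ T : Finset (Fin n), T.card = k ∧
      ∀ v : Fin n, r ≤ ∑ w ∈ T, (t - ((v.val : ℤ) - (w.val : ℤ)).natAbs)}, K ≤ k := by
    rintro k ⟨T, hTc, hTcov⟩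
    set e : Fin n ↪ ℤ := ⟨fun w => (w.val : ℤ), by
      intro x y h
      simp only at h
      apply Fin.val_injective
      exact_mod_cast h⟩ with hedef
    have hlb := lb_aux t r hr htr k (T.map e) (by rw [Finset.card_map, hTc]) 0 ((n:ℤ) - 1)
      (by have : (1:ℤ) ≤ (n:ℤ) := by exact_mod_cast hn
          omega)
      (by intro x h0 hxn
          have hxlt : x.toNat < n := by omega
          have hsm : ∑ w ∈ T.map e, (t - (x - w).natAbs)
              = ∑ w ∈ T, (t - (x - ((w.val : ℕ) : ℤ)).natAbs) := Finset.sum_map T e _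
          rw [hsm]
          have hv : (((⟨x.toNat, hxlt⟩ : Fin n).val : ℤ)) = x := by
            simp [Int.toNat_of_nonneg h0]
          have := hTcov ⟨x.toNat, hxlt⟩
          rwa [hv] at this)
    -- turn the integer inequality into the natural one
    have hcast : ((k * B : ℕ) : ℤ) = (k:ℤ) * (2 * t - r) := by
      rw [hBdef]
      push_cast [Nat.cast_sub (by omega : r ≤ 2 * t)]
      ring
    have hkB : n + r - 1 ≤ k * B := by
      have h2 : ((n:ℤ) - 1) - 0 + r ≤ (k:ℤ) * (2 * t - r) := hlb
      omega
    have h1 : K < k + 1 := by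
      rw [hKdef, Nat.div_lt_iff_lt_mul hB0]
      have hexp : (k + 1) * B = k * B + B := by ring
      omega
    omega
  exact le_antisymm (Nat.sInf_le hmemK) (le_csInf ⟨K, hmemK⟩ hlow)
end

section
/- For integers t ≥ r ≥ 1 with 2t - r ≥ 1 and t ≥ 2, the 2 × (2t - r) grid graph has (t,r) broadcast domination number equal to 2. -/
/-- The 2 × (2t - r) grid graph has (t,r) broadcast domination number 2. -/
theorem grid_two_by_starting_block (t r : ℕ) (hr : 1 ≤ r) (htr : r ≤ t) (ht : 2 ≤ t)
    (hpos : 1 ≤ 2 * t - r) :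
    sInf {k : ℕ | ∃ T : Finset (Fin 2 × Fin (2 * t - r)), T.card = k ∧
        ∀ v : Fin 2 × Fin (2 * t - r), r ≤ ∑ w ∈ T,
          (t - (((v.1.val : ℤ) - (w.1.val : ℤ)).natAbs +
                ((v.2.val : ℤ) - (w.2.val : ℤ)).natAbs))} = 2 := by
  have hne : ((0, ⟨0, hpos⟩) : Fin 2 × Fin (2 * t - r)) ≠
      (1, ⟨2 * t - r - 1, by omega⟩) := by
    simp [Prod.ext_iff]
  have hmem : 2 ∈ {k : ℕ | ∃ T : Finset (Fin 2 × Fin (2 * t - r)), T.card = k ∧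
      ∀ v : Fin 2 × Fin (2 * t - r), r ≤ ∑ w ∈ T,
        (t - (((v.1.val : ℤ) - (w.1.val : ℤ)).natAbs +
              ((v.2.val : ℤ) - (w.2.val : ℤ)).natAbs))} := by
    refine ⟨{(0, ⟨0, hpos⟩), (1, ⟨2 * t - r - 1, by omega⟩)}, ?_, ?_⟩
    · rw [Finset.card_pair hne]
    · intro v
      have h1 := v.1.isLt
      have h2 := v.2.isLt
      rw [Finset.sum_pair hne]
      simp only [Fin.val_zero, Fin.val_one]
      omega
  apply le_antisymm
  · exact Nat.sInf_le hmem
  · refine le_csInf ⟨2, hmem⟩ ?_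
    rintro k ⟨T, hcard, hcov⟩
    by_contra hlt
    push_neg at hlt
    interval_cases k
    · rw [Finset.card_eq_zero] at hcard
      subst hcard
      have := hcov (0, ⟨0, hpos⟩)
      simp at this
      omega
    · rw [Finset.card_eq_one] at hcard
      obtain ⟨w, rfl⟩ := hcard
      have hi := w.1.isLt
      have hc := w.2.isLt
      have h1 := hcov (w.1, ⟨0, hpos⟩)
      have h2 := hcov (w.1, ⟨2 * t - r - 1, by omega⟩)
      have h3 := hcov (⟨1 - w.1.val, by omega⟩, ⟨0, hpos⟩)
      simp only [Finset.sum_singleton] at h1 h2 h3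
      omega
end

section
/- For integers t ≥ r ≥ 1 and m ≥ 2, if n = 2t - r - (m - 2) > 0, then the m × n grid graph has (t,r) broadcast domination number equal to 2. -/
/-- If n = 2t - r - (m - 2) > 0 and m ≥ 2, the m × n grid graph has
(t,r) broadcast domination number 2. -/
theorem grid_starting_block (m n t r : ℕ) (hr : 1 ≤ r) (htr : r ≤ t) (hm : 2 ≤ m)
    (hn : (n : ℤ) = 2 * (t : ℤ) - (r : ℤ) - ((m : ℤ) - 2)) (hnpos : 0 < n) :
    sInf {k : ℕ | ∃ T : Finset (Fin m × Fin n), T.card = k ∧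
        ∀ v : Fin m × Fin n, r ≤ ∑ w ∈ T,
          (t - (((v.1.val : ℤ) - (w.1.val : ℤ)).natAbs +
                ((v.2.val : ℤ) - (w.2.val : ℤ)).natAbs))} = 2 := by
  have hm0 : 0 < m := by omega
  set a : Fin m × Fin n := (⟨0, by omega⟩, ⟨0, by omega⟩) with ha
  set b : Fin m × Fin n := (⟨m - 1, by omega⟩, ⟨n - 1, by omega⟩) with hb
  have hne : a ≠ b := by
    intro h
    have : (0 : ℕ) = m - 1 := congrArg (fun p => p.1.val) h
    omega
  have h2 : 2 ∈ {k : ℕ | ∃ T : Finset (Fin m × Fin n), T.card = k ∧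
        ∀ v : Fin m × Fin n, r ≤ ∑ w ∈ T,
          (t - (((v.1.val : ℤ) - (w.1.val : ℤ)).natAbs +
                ((v.2.val : ℤ) - (w.2.val : ℤ)).natAbs))} := by
    refine ⟨{a, b}, Finset.card_pair hne, ?_⟩
    intro v
    rw [Finset.sum_pair hne]
    have hx := v.1.isLt
    have hy := v.2.isLt
    simp only [ha, hb]
    omega
  refine le_antisymm (Nat.sInf_le h2) (le_csInf ⟨2, h2⟩ ?_)
  rintro k ⟨T, hcard, hcov⟩
  by_contra hlt
  push_neg at hlt
  interval_cases k
  · rw [Finset.card_eq_zero] at hcard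
    have := hcov a
    simp [hcard] at this
    omega
  · rw [Finset.card_eq_one] at hcard
    obtain ⟨w, rfl⟩ := hcard
    have h1 := hcov a
    have h2 := hcov b
    rw [Finset.sum_singleton] at h1 h2
    have hx := w.1.isLt
    have hy := w.2.isLt
    simp only [ha, hb] at h1 h2
    omega
end

section
/- For t ≥ 2, the 2 × 2 × (2t - 2) three-dimensional grid graph admits a (t,1) broadcast dominating set of size 2, i.e., γ_{t,1}(G_{2,2,2t-2}) ≤ 2. -/
/-- For t ≥ 2, the 2 × 2 × (2t-2) three-dimensional grid graph admits a
(t,1) broadcast dominating set of size 2. -/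
theorem grid3d_t1_starting_block (t : ℕ) (ht : 2 ≤ t) :
    ∃ T : Finset (Fin 2 × Fin 2 × Fin (2 * t - 2)), T.card = 2 ∧
      ∀ v : Fin 2 × Fin 2 × Fin (2 * t - 2), 1 ≤ ∑ w ∈ T,
        (t - (((v.1.val : ℤ) - (w.1.val : ℤ)).natAbs +
              ((v.2.1.val : ℤ) - (w.2.1.val : ℤ)).natAbs +
              ((v.2.2.val : ℤ) - (w.2.2.val : ℤ)).natAbs)) := by
  have h1 : t - 2 < 2 * t - 2 := by omega
  have h2 : t - 1 < 2 * t - 2 := by omega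
  set w1 : Fin 2 × Fin 2 × Fin (2 * t - 2) := (0, 0, ⟨t - 2, h1⟩) with hw1
  set w2 : Fin 2 × Fin 2 × Fin (2 * t - 2) := (1, 1, ⟨t - 1, h2⟩) with hw2
  have hne : w1 ≠ w2 := by simp [hw1, hw2, Prod.ext_iff]
  refine ⟨{w1, w2}, by rw [Finset.card_pair hne], ?_⟩
  rintro ⟨x, y, z⟩
  rw [Finset.sum_pair hne]
  simp only [hw1, hw2]
  have hz := z.isLt
  fin_cases x <;> fin_cases y <;> simp <;> omega
end

section
/- For t ≥ 2 and t > r ≥ 1 with 2t - r - 1 ≥ 1, the 2 × 2 × (2t - r - 1) three-dimensional grid graph admits a (t,r) broadcast dominating set of size 2. -/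
/-- For t ≥ 2, t > r ≥ 1 and 2t - r - 1 ≥ 1, the 2 × 2 × (2t - r - 1)
three-dimensional grid graph admits a (t,r) broadcast dominating set of size 2. -/
theorem grid3d_tr_starting_block (t r : ℕ) (ht : 2 ≤ t) (hr : 1 ≤ r) (hrt : r < t)
    (hpos : 1 ≤ 2 * t - r - 1) :
    ∃ T : Finset (Fin 2 × Fin 2 × Fin (2 * t - r - 1)), T.card = 2 ∧
      ∀ v : Fin 2 × Fin 2 × Fin (2 * t - r - 1), r ≤ ∑ w ∈ T,
        (t - (((v.1.val : ℤ) - (w.1.val : ℤ)).natAbs +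
              ((v.2.1.val : ℤ) - (w.2.1.val : ℤ)).natAbs +
              ((v.2.2.val : ℤ) - (w.2.2.val : ℤ)).natAbs)) := by
  set k := 2 * t - r - 1 with hk
  have hne : ((0 : Fin 2), (0 : Fin 2), (⟨0, hpos⟩ : Fin k)) ≠
      ((1 : Fin 2), (1 : Fin 2), (⟨k - 1, by omega⟩ : Fin k)) := by
    simp [Prod.ext_iff]
  refine ⟨{((0 : Fin 2), (0 : Fin 2), (⟨0, hpos⟩ : Fin k)),
           ((1 : Fin 2), (1 : Fin 2), (⟨k - 1, by omega⟩ : Fin k))},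
    Finset.card_pair hne, ?_⟩
  intro v
  rw [Finset.sum_pair hne]
  obtain ⟨⟨a, ha⟩, ⟨b, hb⟩, ⟨c, hc⟩⟩ := v
  simp only
  omega
end

section
/- Let t ≥ r ≥ 1 and suppose the m × n × k 3D grid graph with towers at positions (1,1,k) and (m,n,1) forms an efficient (t,r) broadcast dominating set (every vertex in the overlap of both broadcast zones receives signal exactly r). If m' + n' + k' = m + n + k with m',n',k' ≥ 1, then placing towers at (1,1,k') and (m',n',1) in the m' × n' × k' 3D grid graph yields a (t,r) broadcast dominating set of size 2. -/
set_option maxHeartbeats 2000000 in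
/-- If towers at (1,1,k) and (m,n,1) efficiently (t,r) broadcast dominate the
m × n × k 3D grid graph, and m' + n' + k' = m + n + k, then towers at (1,1,k') and
(m',n',1) form a (t,r) broadcast dominating set of the m' × n' × k' 3D grid graph.
Vertices are triples (x,y,z) with 1 ≤ x ≤ m etc., and distances are L1 distances
(written with truncated natural subtraction, which is exact on the given ranges). -/
theorem grid3d_starting_block_transfer (m n k m' n' k' t r : ℕ)
    (hm : 1 ≤ m) (hn : 1 ≤ n) (hk : 1 ≤ k)
    (hm' : 1 ≤ m') (hn' : 1 ≤ n') (hk' : 1 ≤ k')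
    (hr : 1 ≤ r) (htr : r ≤ t)
    (hdom : ∀ x y z : ℕ, 1 ≤ x → x ≤ m → 1 ≤ y → y ≤ n → 1 ≤ z → z ≤ k →
      r ≤ (t - ((x - 1) + (y - 1) + (k - z))) + (t - ((m - x) + (n - y) + (z - 1))))
    (heff : ∀ x y z : ℕ, 1 ≤ x → x ≤ m → 1 ≤ y → y ≤ n → 1 ≤ z → z ≤ k →
      (x - 1) + (y - 1) + (k - z) ≤ t - 1 → (m - x) + (n - y) + (z - 1) ≤ t - 1 →
      (t - ((x - 1) + (y - 1) + (k - z))) + (t - ((m - x) + (n - y) + (z - 1))) = r)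
    (hsum : m' + n' + k' = m + n + k) :
    ∀ x y z : ℕ, 1 ≤ x → x ≤ m' → 1 ≤ y → y ≤ n' → 1 ≤ z → z ≤ k' →
      r ≤ (t - ((x - 1) + (y - 1) + (k' - z))) + (t - ((m' - x) + (n' - y) + (z - 1))) := by
  have key : ∀ a : ℕ, a ≤ (m-1)+(n-1)+(k-1) →
      r ≤ (t - a) + (t - ((m-1)+(n-1)+(k-1) - a)) := by
    intro a ha
    have h1 := hdom (min (a+1) m) (min (a - (m-1) + 1) n) (k - (a - (m-1) - (n-1)))
      (by omega) (by omega) (by omega) (by omega) (by omega) (by omega)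
    have e1 : (min (a+1) m - 1) + (min (a - (m-1) + 1) n - 1)
        + (k - (k - (a - (m-1) - (n-1)))) = a := by omega
    have e2 : (m - min (a+1) m) + (n - min (a - (m-1) + 1) n)
        + (k - (a - (m-1) - (n-1)) - 1) = (m-1)+(n-1)+(k-1) - a := by omega
    rw [e1, e2] at h1
    exact h1
  intro x y z hx hxm hy hyn hz hzk
  have h := key ((x - 1) + (y - 1) + (k' - z)) (by omega)
  have e : (m-1)+(n-1)+(k-1) - ((x - 1) + (y - 1) + (k' - z))
      = (m' - x) + (n' - y) + (z - 1) := by omega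
  rw [e] at h
  exact h
end

section
/- For integers t > r ≥ 1 and m ≤ 2(t - r) + 1 with m ≥ 1 and n ≥ 1, the (t,r) broadcast domination number of the m × n king's grid graph equals ⌈(n + r - 1)/(2t - r)⌉. -/
/-!
Put the towers on the middle row, at columns `t - r + i(2t - r)` clipped to `n - 1`. Every
vertex is within `t - r` of that row, so it is either within `t - r` of a tower column, where one
tower gives it signal `r`, or lies between two consecutive tower columns, at most `2t - r` apart,
which together give it signal `r`. This uses at most `⌈(n + r - 1)/(2t - r)⌉` towers.

Conversely, a tower at `w` gives `(i, j)` at most `t - |w.2 - j|`, so the columns of a dominating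
set, as towers on a path, dominate the path `0, …, n - 1`. There the end vertex `0` gets signal `r`
either from one tower, which then reaches no vertex beyond `2t - r - 1`, or from at least two
towers giving at most `r - 1` each, which reach no vertex beyond `2t - 2`. Removing them and
inducting on the number `k` of towers gives `n + r - 1 ≤ k(2t - r)`; with at most two towers this
is checked directly.
-/

namespace KingsGrid

open Multiset

def lineSignal (t : ℕ) (X : Multiset ℤ) (y : ℤ) : ℕ :=
  (X.map fun x => t - (x - y).natAbs).sum

/-- `X` dominates the interval `[a, a + N)` of the integer line. -/
def LineCovers (t r : ℕ) (X : Multiset ℤ) (a : ℤ) (N : ℕ) : Prop :=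
  ∀ y, a ≤ y → y < a + N → r ≤ lineSignal t X y

section Line

variable {t r : ℕ} {X A B : Multiset ℤ} {a y : ℤ} {N : ℕ}

lemma lineSignal_add : lineSignal t (A + B) y = lineSignal t A y + lineSignal t B y := by
  simp [lineSignal]

lemma lineSignal_singleton (x : ℤ) : lineSignal t {x} y = t - (x - y).natAbs := by
  simp [lineSignal]

lemma lineSignal_pair (x z : ℤ) :
    lineSignal t {x, z} y = (t - (x - y).natAbs) + (t - (z - y).natAbs) := by
  simp [lineSignal]

lemma lineSignal_eq_zero (h : ∀ x ∈ X, t ≤ (x - y).natAbs) : lineSignal t X y = 0 := by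
  refine sum_eq_zero fun s hs => ?_
  obtain ⟨x, hx, rfl⟩ := mem_map.1 hs
  have := h x hx
  omega

lemma lineSignal_le_card_mul {s : ℕ} (h : ∀ x ∈ X, t - (x - y).natAbs ≤ s) :
    lineSignal t X y ≤ card X * s := by
  simpa [lineSignal] using sum_le_card_nsmul (X.map fun x => t - (x - y).natAbs) s
    (by simpa using h)

lemma LineCovers.of_add {d : ℕ} (h : LineCovers t r (A + B) a N) (hA : ∀ x ∈ A, x + t ≤ a + d) :
    LineCovers t r B (a + d) (N - d) := by
  intro y hy hyN
  have hy' := h y (by omega) (by omega)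
  rwa [lineSignal_add, lineSignal_eq_zero fun x hx => by have := hA x hx; omega, zero_add] at hy'

lemma LineCovers.add_sub_one_le_of_card_eq_one (hr : 1 ≤ r) (hN : 1 ≤ N)
    (h : LineCovers t r X a N) (hX : card X = 1) : N + r - 1 ≤ 2 * t - r := by
  obtain ⟨x, rfl⟩ := card_eq_one.1 hX
  have h₀ := h a le_rfl (by omega)
  have h₁ := h (a + N - 1) (by omega) (by omega)
  rw [lineSignal_singleton] at h₀ h₁
  omega

lemma LineCovers.add_sub_one_le_of_pair_of_weak (hr : 1 ≤ r) (hrt : r < t) (hN : 1 ≤ N)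
    {x z : ℤ} (h : LineCovers t r {x, z} a N) (hx : t - r < (x - a).natAbs)
    (hz : t - r < (z - a).natAbs) :
    N + r - 1 ≤ 2 * (2 * t - r) := by
  have h₀ := h a le_rfl (by omega)
  have h₁ := h (a + N - 1) (by omega) (by omega)
  rw [lineSignal_pair] at h₀ h₁
  omega

lemma LineCovers.erase_of_natAbs_le (hrt : r ≤ t) {x : ℤ} (h : LineCovers t r X a N)
    (hx : x ∈ X) (hxa : (x - a).natAbs ≤ t - r) :
    LineCovers t r (X.erase x) (a + ((2 * t - r : ℕ) : ℤ)) (N - (2 * t - r)) := by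
  rw [← cons_erase hx, ← singleton_add] at h
  refine h.of_add (d := 2 * t - r) fun y hy => ?_
  rw [mem_singleton.1 hy]
  omega

lemma two_le_card_filter_of_forall_weak (hr : 1 ≤ r) (h : r ≤ lineSignal t X a)
    (hweak : ∀ x ∈ X, t - r < (x - a).natAbs) :
    2 ≤ card (X.filter fun x => (x - a).natAbs < t) := by
  have hfar : lineSignal t (X.filter fun x => ¬ (x - a).natAbs < t) a = 0 :=
    lineSignal_eq_zero fun x hx => by have := (mem_filter.1 hx).2; omega
  rw [← filter_add_not (fun x => (x - a).natAbs < t) X, lineSignal_add, hfar, add_zero] at h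
  have hle := h.trans (lineSignal_le_card_mul (s := r - 1) fun x hx => by
    have := hweak x (mem_filter.1 hx).1; omega)
  by_contra hlt
  have : card (X.filter fun x => (x - a).natAbs < t) * (r - 1) ≤ 1 * (r - 1) :=
    Nat.mul_le_mul_right _ (by omega)
  omega

lemma LineCovers.filter_far (h : LineCovers t r X a N) :
    LineCovers t r (X.filter fun x => ¬ (x - a).natAbs < t) (a + ((2 * t - 1 : ℕ) : ℤ))
      (N - (2 * t - 1)) := by
  rw [← filter_add_not (fun x => (x - a).natAbs < t) X] at h
  refine h.of_add (d := 2 * t - 1) fun x hx => ?_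
  have := (mem_filter.1 hx).2
  omega

theorem LineCovers.add_sub_one_le_card_mul (hr : 1 ≤ r) (hrt : r < t) (hN : 1 ≤ N)
    (h : LineCovers t r X a N) : N + r - 1 ≤ card X * (2 * t - r) := by
  induction hk : card X using Nat.strong_induction_on generalizing X a N with
  | _ k ih =>
  subst hk
  by_cases hstrong : ∃ x ∈ X, (x - a).natAbs ≤ t - r
  · obtain ⟨x, hx, hxa⟩ := hstrong
    have hcard := card_erase_add_one hx
    rcases Nat.lt_or_ge (2 * t - r) N with hNc | hNc
    · have hrest := ih _ (by omega) (by omega) (h.erase_of_natAbs_le hrt.le hx hxa) rfl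
      have hsplit : card X * (2 * t - r) = card (X.erase x) * (2 * t - r) + (2 * t - r) := by
        rw [← hcard, add_one_mul]
      omega
    · rcases Nat.lt_or_ge (card X) 2 with hX | hX
      · have hX1 : card X = 1 := by omega
        simpa [hX1] using h.add_sub_one_le_of_card_eq_one hr hN hX1
      · have := Nat.mul_le_mul_right (2 * t - r) hX
        omega
  · push Not at hstrong
    have hnear := two_le_card_filter_of_forall_weak hr (h a le_rfl (by omega)) hstrong
    have hcard := congrArg card (filter_add_not (fun x => (x - a).natAbs < t) X)
    rw [card_add] at hcard
    rcases Nat.lt_or_ge (2 * t - 1) N with hN2 | hN2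
    · have hrest := ih _ (by omega) (by omega) h.filter_far rfl
      have hnear' := Nat.mul_le_mul_right (2 * t - r) hnear
      have hsplit : card X * (2 * t - r) =
          card (X.filter fun x => (x - a).natAbs < t) * (2 * t - r) +
            card (X.filter fun x => ¬ (x - a).natAbs < t) * (2 * t - r) := by
        rw [← hcard, add_mul]
      omega
    · rcases Nat.lt_or_ge (card X) 3 with hX | hX
      · obtain ⟨x, z, rfl⟩ := card_eq_two.1 (by omega : card X = 2)
        simpa using h.add_sub_one_le_of_pair_of_weak hr hrt hN (hstrong x (by simp))
          (hstrong z (by simp))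
      · have := Nat.mul_le_mul_right (2 * t - r) hX
        omega

end Line

section Grid

variable {m n : ℕ}

def kingDist (v w : Fin m × Fin n) : ℕ :=
  max (((v.1.val : ℤ) - (w.1.val : ℤ)).natAbs) (((v.2.val : ℤ) - (w.2.val : ℤ)).natAbs)

def signal (t : ℕ) (T : Finset (Fin m × Fin n)) (v : Fin m × Fin n) : ℕ :=
  ∑ w ∈ T, (t - kingDist v w)

variable {t r : ℕ}

lemma lineCovers_columns {T : Finset (Fin m × Fin n)} (i : Fin m)
    (hT : ∀ j, r ≤ signal t T (i, j)) : LineCovers t r (T.val.map fun w => (w.2.val : ℤ)) 0 n := by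
  intro y hy0 hyn
  lift y to ℕ using hy0
  refine (hT ⟨y, by omega⟩).trans ?_
  rw [signal, Finset.sum_eq_multiset_sum, lineSignal, Multiset.map_map]
  refine Multiset.sum_map_le_sum_map _ _ fun w _ => ?_
  simp only [Function.comp_apply, kingDist]
  omega

theorem add_sub_one_le_card_mul_of_dominating_row (hr : 1 ≤ r) (hrt : r < t) (hn : 1 ≤ n)
    {T : Finset (Fin m × Fin n)} (i : Fin m) (hT : ∀ j, r ≤ signal t T (i, j)) :
    n + r - 1 ≤ T.card * (2 * t - r) := by
  simpa using (lineCovers_columns i hT).add_sub_one_le_card_mul hr hrt (by omega)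

def towerColumn (n t r i : ℕ) : ℕ := min (t - r + i * (2 * t - r)) (n - 1)

lemma exists_towerColumn_or_pair {K b ρ : ℕ} (hr : 1 ≤ r) (hrt : r < t)
    (hK : n + r - 1 ≤ K * (2 * t - r)) (hb : b < n) (hρ : ρ ≤ t - r) :
    (∃ i < K, r ≤ t - max ρ ((b : ℤ) - towerColumn n t r i).natAbs) ∨
    ∃ i, i + 1 < K ∧ towerColumn n t r i ≠ towerColumn n t r (i + 1) ∧
      r ≤ (t - max ρ ((b : ℤ) - towerColumn n t r i).natAbs) +
        (t - max ρ ((b : ℤ) - towerColumn n t r (i + 1)).natAbs) := by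
  have hc : 0 < 2 * t - r := by omega
  have hi : b / (2 * t - r) < K := (Nat.div_lt_iff_lt_mul hc).2 (by omega)
  have hdiv := Nat.div_add_mod' b (2 * t - r)
  have hmod := Nat.mod_lt b hc
  generalize b / (2 * t - r) = q at *
  generalize b % (2 * t - r) = s at *
  have hsucc := add_one_mul q (2 * t - r)
  by_cases hnear : s ≤ 2 * (t - r)
  · exact Or.inl ⟨q, hi, by unfold towerColumn; omega⟩
  · have hi' : q + 1 < K := Nat.lt_of_mul_lt_mul_right (a := 2 * t - r) (by omega)
    refine Or.inr ⟨q, hi', ?_, ?_⟩ <;> unfold towerColumn <;> omega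

theorem exists_dominating_card_le {K : ℕ} (hr : 1 ≤ r) (hrt : r < t) (hm : 1 ≤ m) (hn : 1 ≤ n)
    (hmr : m ≤ 2 * (t - r) + 1) (hK : n + r - 1 ≤ K * (2 * t - r)) :
    ∃ T : Finset (Fin m × Fin n), T.card ≤ K ∧ ∀ v, r ≤ signal t T v := by
  let tower (i : ℕ) : Fin m × Fin n :=
    (⟨(m - 1) / 2, by omega⟩, ⟨towerColumn n t r i, by unfold towerColumn; omega⟩)
  have mem : ∀ i < K, tower i ∈ (Finset.range K).image tower :=
    fun i hi => Finset.mem_image_of_mem _ (Finset.mem_range.2 hi)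
  refine ⟨(Finset.range K).image tower, Finset.card_image_le.trans (Finset.card_range K).le,
    fun v => ?_⟩
  have hρ : ((v.1.val : ℤ) - ((m - 1) / 2 : ℕ)).natAbs ≤ t - r := by
    have := v.1.isLt
    omega
  rcases exists_towerColumn_or_pair hr hrt hK v.2.isLt hρ with ⟨i, hi, h⟩ | ⟨i, hi, hne, h⟩
  · exact h.trans (Finset.single_le_sum (f := fun w => t - kingDist v w)
      (fun _ _ => Nat.zero_le _) (mem i hi))
  · exact h.trans (Finset.add_le_sum (f := fun w => t - kingDist v w) (fun _ _ => Nat.zero_le _)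
      (mem i (by omega)) (mem (i + 1) hi) fun e => hne (congrArg (fun w => w.2.val) e))

end Grid

end KingsGrid

/-- For t > r ≥ 1 and m ≤ 2(t-r) + 1, the (t,r) broadcast domination number of the
m × n king's grid graph (Chebyshev distance) equals ⌈(n + r - 1)/(2t - r)⌉. -/
theorem kings_grid_domination_number (m n t r : ℕ) (hr : 1 ≤ r) (hrt : r < t)
    (hm1 : 1 ≤ m) (hn1 : 1 ≤ n) (hm : m ≤ 2 * (t - r) + 1) :
    sInf {k : ℕ | ∃ T : Finset (Fin m × Fin n), T.card = k ∧
        ∀ v : Fin m × Fin n, r ≤ ∑ w ∈ T,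
          (t - max (((v.1.val : ℤ) - (w.1.val : ℤ)).natAbs)
                   (((v.2.val : ℤ) - (w.2.val : ℤ)).natAbs))} =
      (n + r - 1 + (2 * t - r) - 1) / (2 * t - r) := by
  have hc : 0 < 2 * t - r := by omega
  change sInf {k | ∃ T, T.card = k ∧ ∀ v, r ≤ KingsGrid.signal t T v} = _
  rw [← Nat.ceilDiv_eq_add_pred_div]
  have hK : n + r - 1 ≤ (n + r - 1) ⌈/⌉ (2 * t - r) * (2 * t - r) := by
    simpa [mul_comm] using le_smul_ceilDiv (b := n + r - 1) hc
  obtain ⟨T, hTcard, hT⟩ := KingsGrid.exists_dominating_card_le hr hrt hm1 hn1 hm hK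
  refine le_antisymm (le_trans (Nat.sInf_le ⟨T, rfl, hT⟩) hTcard) (le_csInf ⟨_, T, rfl, hT⟩ ?_)
  rintro _ ⟨T', rfl, hT'⟩
  rw [ceilDiv_le_iff_le_mul hc, mul_comm]
  exact KingsGrid.add_sub_one_le_card_mul_of_dominating_row hr hrt hn1 ⟨0, hm1⟩ fun j => hT' _
end

section
/- For t > 2, placing towers of strength t at all points of the form ((2t-2)x - y, x + (2t-2)y) for x, y ∈ ℤ is a (t,2) broadcast dominating set of the infinite king's lattice: every point of ℤ² receives total signal at least 2, where the signal at v is Σ_w max(0, t - d(v,w)) over all towers w and d is Chebyshev distance. -/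
/-- Balanced division: any integer is within m of a multiple of 2m+1. -/
private lemma round_div (m z : ℤ) (hm : 0 ≤ m) :
    ∃ x u : ℤ, z = (2*m+1)*x + u ∧ -m ≤ u ∧ u ≤ m := by
  refine ⟨(z+m)/(2*m+1), (z+m)%(2*m+1) - m, ?_, ?_, ?_⟩
  · have h := Int.mul_ediv_add_emod (z+m) (2*m+1)
    linarith
  · have h := Int.emod_nonneg (z+m) (show (2*m+1) ≠ 0 by omega)
    linarith
  · have h := Int.emod_lt_of_pos (z+m) (show (0:ℤ) < 2*m+1 by omega)
    linarith

private lemma pair_case (t : ℤ) (a b : ℤ) (x y x' y' : ℤ)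
    (hne : (((2*t-2)*x - y : ℤ), (x + (2*t-2)*y : ℤ)) ≠ ((2*t-2)*x' - y', x' + (2*t-2)*y'))
    (h1 : max |a - ((2*t-2)*x - y)| |b - (x + (2*t-2)*y)| ≤ t - 1)
    (h2 : max |a - ((2*t-2)*x' - y')| |b - (x' + (2*t-2)*y')| ≤ t - 1) :
    ∃ T : Finset (ℤ × ℤ),
      (∀ w ∈ T, ∃ x y : ℤ, w = ((2 * t - 2) * x - y, x + (2 * t - 2) * y)) ∧
      2 ≤ ∑ w ∈ T, max 0 (t - max |a - w.1| |b - w.2|) := by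
  refine ⟨{((2*t-2)*x - y, x + (2*t-2)*y), ((2*t-2)*x' - y', x' + (2*t-2)*y')}, ?_, ?_⟩
  · intro w hw
    simp only [Finset.mem_insert, Finset.mem_singleton] at hw
    rcases hw with h | h
    · exact ⟨x, y, h⟩
    · exact ⟨x', y', h⟩
  · rw [Finset.sum_pair hne]
    have e1 : (1:ℤ) ≤ max 0 (t - max |a - ((2*t-2)*x - y)| |b - (x + (2*t-2)*y)|) :=
      le_trans (by linarith) (le_max_right _ _)
    have e2 : (1:ℤ) ≤ max 0 (t - max |a - ((2*t-2)*x' - y')| |b - (x' + (2*t-2)*y')|) :=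
      le_trans (by linarith) (le_max_right _ _)
    linarith

/-- For t > 2, towers at the points ((2t-2)x - y, x + (2t-2)y), x, y ∈ ℤ, form a
(t,2) broadcast dominating set of the infinite king's lattice: every point receives
total signal at least 2 (witnessed by a finite set of towers, since signals are
nonnegative). -/
theorem kings_lattice_t2_domination (t : ℤ) (ht : 2 < t) (v : ℤ × ℤ) :
    ∃ T : Finset (ℤ × ℤ),
      (∀ w ∈ T, ∃ x y : ℤ, w = ((2 * t - 2) * x - y, x + (2 * t - 2) * y)) ∧
      2 ≤ ∑ w ∈ T, max 0 (t - max |v.1 - w.1| |v.2 - w.2|) := by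
  obtain ⟨a, b⟩ := v
  have hm0 : (0:ℤ) ≤ 2*(t-1)^2 := by positivity
  have hm2 : (2:ℤ) ≤ 2*(t-1)^2 := by nlinarith
  obtain ⟨x, u, hux, hu1, hu2⟩ := round_div (2*(t-1)^2) ((2*t-2)*a + b) hm0
  obtain ⟨y, r, hyr, hr1, hr2⟩ := round_div (2*(t-1)^2) ((2*t-2)*b - a) hm0
  have hNm : (2*(2*(t-1)^2)+1 : ℤ) = (2*t-2)^2 + 1 := by ring
  rw [hNm] at hux hyr
  obtain ⟨p1, hp1def⟩ : ∃ p : ℤ, p = a - ((2*t-2)*x - y) := ⟨_, rfl⟩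
  obtain ⟨p2, hp2def⟩ : ∃ p : ℤ, p = b - (x + (2*t-2)*y) := ⟨_, rfl⟩
  have hp1 : ((2*t-2)^2+1) * p1 = (2*t-2)*u - r := by
    linear_combination ((2*t-2)^2+1)*hp1def + (2*t-2)*hux - hyr
  have hp2 : ((2*t-2)^2+1) * p2 = u + (2*t-2)*r := by
    linear_combination ((2*t-2)^2+1)*hp2def + hux + (2*t-2)*hyr
  -- bounds |p1|, |p2| ≤ t - 1
  have hb1a : -(t-1) ≤ p1 := by nlinarith [hp1, hu1, hr2]
  have hb1b : p1 ≤ t - 1 := by nlinarith [hp1, hu2, hr1]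
  have hb2a : -(t-1) ≤ p2 := by nlinarith [hp2, hu1, hr2]
  have hb2b : p2 ≤ t - 1 := by nlinarith [hp2, hu2, hr1]
  by_cases hA : p1 ≤ t-2 ∧ -(t-2) ≤ p1 ∧ p2 ≤ t-2 ∧ -(t-2) ≤ p2
  · -- single tower suffices
    refine ⟨{((2*t-2)*x - y, x + (2*t-2)*y)}, ?_, ?_⟩
    · intro w hw
      simp only [Finset.mem_singleton] at hw
      exact ⟨x, y, hw⟩
    · rw [Finset.sum_singleton]
      have h2' : (2:ℤ) ≤ t - max |a - ((2*t-2)*x - y)| |b - (x + (2*t-2)*y)| := by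
        rw [← hp1def, ← hp2def]
        have : max |p1| |p2| ≤ t - 2 := by
          simp only [max_le_iff, abs_le]; omega
        linarith
      exact le_trans h2' (le_max_right _ _)
  · -- two towers, each within distance t-1
    push_neg at hA
    have base1 : max |a - ((2*t-2)*x - y)| |b - (x + (2*t-2)*y)| ≤ t - 1 := by
      rw [← hp1def, ← hp2def]
      simp only [max_le_iff, abs_le]; omega
    have main : ∀ d1 d2 : ℤ, ¬ (d1 = 0 ∧ d2 = 0) →
        max |p1 - ((2*t-2)*d1 - d2)| |p2 - (d1 + (2*t-2)*d2)| ≤ t - 1 →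
        ∃ T : Finset (ℤ × ℤ),
          (∀ w ∈ T, ∃ x y : ℤ, w = ((2 * t - 2) * x - y, x + (2 * t - 2) * y)) ∧
          2 ≤ ∑ w ∈ T, max 0 (t - max |a - w.1| |b - w.2|) := by
      intro d1 d2 hd hbd
      have k1 : a - ((2*t-2)*(x+d1) - (y+d2)) = p1 - ((2*t-2)*d1 - d2) := by
        rw [hp1def]; ring
      have k2 : b - ((x+d1) + (2*t-2)*(y+d2)) = p2 - (d1 + (2*t-2)*d2) := by
        rw [hp2def]; ring
      refine pair_case t a b x y (x+d1) (y+d2) ?_ base1 (by rw [k1, k2]; exact hbd)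
      intro h
      have h1 := congrArg Prod.fst h
      have h2 := congrArg Prod.snd h
      simp only at h1 h2
      have e1 : ((2*t-2)^2+1) * d1 = 0 := by linear_combination (-(2*t-2))*h1 - h2
      have e2 : ((2*t-2)^2+1) * d2 = 0 := by linear_combination h1 - (2*t-2)*h2
      have hNne : ((2*t-2)^2+1 : ℤ) ≠ 0 := by positivity
      exact hd ⟨by simpa [hNne] using mul_eq_zero.mp e1,
                by simpa [hNne] using mul_eq_zero.mp e2⟩
    by_cases c1 : p1 = t - 1
    · by_cases c2 : p2 = -(t-1)
      · -- shift (0, -1): offset (p1 - 1, p2 + (2t-2))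
        refine main 0 (-1) (by simp) ?_
        simp only [max_le_iff, abs_le]
        refine ⟨⟨?_, ?_⟩, ?_, ?_⟩ <;> linarith
      · -- shift (1, 0): offset (p1 - (2t-2), p2 - 1)
        refine main 1 0 (by simp) ?_
        simp only [max_le_iff, abs_le]
        refine ⟨⟨?_, ?_⟩, ?_, ?_⟩ <;> linarith [lt_of_le_of_ne hb2a (Ne.symm c2)]
    · by_cases c3 : p1 = -(t-1)
      · by_cases c4 : p2 = t - 1
        · -- shift (0, 1): offset (p1 + 1, p2 - (2t-2))
          refine main 0 1 (by simp) ?_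
          simp only [max_le_iff, abs_le]
          refine ⟨⟨?_, ?_⟩, ?_, ?_⟩ <;> linarith
        · -- shift (-1, 0): offset (p1 + (2t-2), p2 + 1)
          refine main (-1) 0 (by simp) ?_
          simp only [max_le_iff, abs_le]
          refine ⟨⟨?_, ?_⟩, ?_, ?_⟩ <;> linarith [lt_of_le_of_ne hb2b c4]
      · by_cases c5 : p2 = t - 1
        · -- shift (0, 1): offset (p1 + 1, p2 - (2t-2))
          refine main 0 1 (by simp) ?_
          simp only [max_le_iff, abs_le]
          refine ⟨⟨?_, ?_⟩, ?_, ?_⟩ <;>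
            linarith [lt_of_le_of_ne hb1b c1, lt_of_le_of_ne hb1a (Ne.symm c3)]
        · -- forced p2 = -(t-1): shift (0, -1): offset (p1 - 1, p2 + (2t-2))
          have hc1 := lt_of_le_of_ne hb1b c1
          have hc3 := lt_of_le_of_ne hb1a (Ne.symm c3)
          have hc5 := lt_of_le_of_ne hb2b c5
          have c6 : p2 = -(t-1) := by
            by_contra c6
            have := hA (by omega) (by omega) (by omega)
            omega
          refine main 0 (-1) (by simp) ?_
          simp only [max_le_iff, abs_le]
          refine ⟨⟨?_, ?_⟩, ?_, ?_⟩ <;> linarith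
end

section
/- For t > r ≥ 1 and n = 4t - 3r, the 2 × n slant grid graph has (t,r) broadcast domination number equal to 2, witnessed by towers at the top row column t - r + 1 and bottom row column n - (t - r + 1) + 1 appropriately placed so that every vertex receives signal at least r and every doubly-covered vertex receives exactly r. -/
/-- The 2 × n slant grid graph: rows are `Fin 2` (index 0 = bottom row, index 1 = top
row), columns are `Fin n`; grid edges plus diagonal edges joining bottom (0, j) to
top (1, j+1). -/
def slantGraph (n : ℕ) : SimpleGraph (Fin 2 × Fin n) where
  Adj v w :=
    (v.1 = w.1 ∧ ((v.2.val : ℤ) - (w.2.val : ℤ)).natAbs = 1) ∨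
    (v.2 = w.2 ∧ v.1 ≠ w.1) ∨
    (v.1.val = 0 ∧ w.1.val = 1 ∧ w.2.val = v.2.val + 1) ∨
    (w.1.val = 0 ∧ v.1.val = 1 ∧ v.2.val = w.2.val + 1)
  symm := by
    constructor
    rintro v w (⟨h1, h2⟩ | ⟨h1, h2⟩ | ⟨h1, h2, h3⟩ | ⟨h1, h2, h3⟩)
    · exact Or.inl ⟨h1.symm, by rw [← Int.natAbs_neg, neg_sub]; exact h2⟩
    · exact Or.inr (Or.inl ⟨h1.symm, h2.symm⟩)
    · exact Or.inr (Or.inr (Or.inr ⟨h1, h2, h3⟩))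
    · exact Or.inr (Or.inr (Or.inl ⟨h1, h2, h3⟩))
  loopless := by
    constructor
    rintro v (⟨-, h⟩ | ⟨-, h⟩ | ⟨h1, h2, -⟩ | ⟨h1, h2, -⟩)
    · simp at h
    · exact h rfl
    · omega
    · omega

/-! In the coordinates column and column − row, every edge of the slant grid changes each
coordinate by at most one, and from any vertex some edge decreases both nonzero coordinate
differences to a given target at once; so the graph distance is the larger of the two coordinate
differences. With this closed form, that the two towers dominate and that doubly covered
vertices receive exactly `r` is linear arithmetic. A single tower reaches both ends of its row
with signal `r` only if the row has at most `2 (t - r) + 1` vertices, and `4 t - 3 r` is larger. -/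

namespace SimpleGraph

variable {V : Type*} {G : SimpleGraph V}

theorem Walk.natAbs_sub_le_length (f : V → ℤ)
    (hf : ∀ ⦃u v⦄, G.Adj u v → (f u - f v).natAbs ≤ 1)
    {v w : V} (p : G.Walk v w) : (f v - f w).natAbs ≤ p.length := by
  induction p with
  | nil => simp
  | cons h _ ih => have := hf h; rw [Walk.length_cons]; omega

theorem exists_walk_length_le_of_exists_adj_lt (d : V → V → ℕ)
    (hd : ∀ v w, v ≠ w → ∃ u, G.Adj v u ∧ d u w < d v w) (v w : V) :
    ∃ p : G.Walk v w, p.length ≤ d v w := by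
  induction h : d v w using Nat.strong_induction_on generalizing v with
  | _ k ih =>
    by_cases hvw : v = w
    · subst hvw; exact ⟨.nil, by simp⟩
    obtain ⟨u, hvu, hlt⟩ := hd v w hvw
    obtain ⟨p, hp⟩ := ih _ (h ▸ hlt) u rfl
    exact ⟨.cons hvu p, by rw [Walk.length_cons]; omega⟩

def IsBroadcastDominating [Fintype V] (G : SimpleGraph V) (t r : ℕ) (T : Finset V) : Prop :=
  ∀ v, r ≤ ∑ w ∈ T, (t - G.dist v w)

theorem IsBroadcastDominating.mono [Fintype V] {t r : ℕ} {T T' : Finset V} (hT : T ⊆ T')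
    (h : G.IsBroadcastDominating t r T) : G.IsBroadcastDominating t r T' :=
  fun v => (h v).trans (Finset.sum_le_sum_of_subset hT)

end SimpleGraph

namespace SlantGrid

variable {n : ℕ}

def col (v : Fin 2 × Fin n) : ℤ := v.2.val

def height (v : Fin 2 × Fin n) : ℤ := (v.2.val : ℤ) - v.1.val

def slantDist (v w : Fin 2 × Fin n) : ℕ :=
  max (col v - col w).natAbs (height v - height w).natAbs

theorem natAbs_col_sub_le_one {v w : Fin 2 × Fin n} (h : (slantGraph n).Adj v w) :
    (col v - col w).natAbs ≤ 1 := by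
  obtain ⟨⟨a, ha⟩, i⟩ := v
  obtain ⟨⟨b, hb⟩, j⟩ := w
  simp only [slantGraph, col, Fin.mk.injEq] at h ⊢
  omega

theorem natAbs_height_sub_le_one {v w : Fin 2 × Fin n} (h : (slantGraph n).Adj v w) :
    (height v - height w).natAbs ≤ 1 := by
  obtain ⟨⟨a, ha⟩, i⟩ := v
  obtain ⟨⟨b, hb⟩, j⟩ := w
  simp only [slantGraph, height, Fin.mk.injEq] at h ⊢
  omega

theorem exists_adj_slantDist_lt {v w : Fin 2 × Fin n} (hvw : v ≠ w) :
    ∃ u, (slantGraph n).Adj v u ∧ slantDist u w < slantDist v w := by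
  obtain ⟨a, i, hi⟩ := v
  obtain ⟨b, j, hj⟩ := w
  -- Go to row `b`, moving one column towards `j` unless that step is not an edge.
  refine ⟨(b, ⟨if i < j ∧ a ≤ b then i + 1 else if j < i ∧ b ≤ a then i - 1 else i, ?_⟩),
    ?_, ?_⟩ <;>
  fin_cases a <;> fin_cases b <;> simp [slantGraph, slantDist, col, height] at hvw ⊢ <;>
  (try split_ifs) <;> omega

theorem dist_eq_slantDist (v w : Fin 2 × Fin n) : (slantGraph n).dist v w = slantDist v w := by
  obtain ⟨p, hp⟩ := SimpleGraph.exists_walk_length_le_of_exists_adj_lt slantDist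
    (fun _ _ => exists_adj_slantDist_lt) v w
  obtain ⟨q, hq⟩ := p.reachable.exists_walk_length_eq_dist
  refine le_antisymm ((SimpleGraph.dist_le p).trans hp) (hq ▸ max_le ?_ ?_)
  · exact q.natAbs_sub_le_length col fun _ _ => natAbs_col_sub_le_one
  · exact q.natAbs_sub_le_length height fun _ _ => natAbs_height_sub_le_one

theorem le_tsub_dist_add_tsub_dist {t r : ℕ} (hn : n = 4 * t - 3 * r) (hA : t - r < n)
    (hB : n - (t - r + 1) < n) (v : Fin 2 × Fin n) :
    r ≤ (t - (slantGraph n).dist v (1, ⟨t - r, hA⟩))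
      + (t - (slantGraph n).dist v (0, ⟨n - (t - r + 1), hB⟩)) := by
  obtain ⟨⟨a, ha⟩, i, hi⟩ := v
  simp only [dist_eq_slantDist, slantDist, col, height]
  omega

theorem tsub_dist_add_tsub_dist_eq {t r : ℕ} (hrt : r ≤ t) (hn : n = 4 * t - 3 * r)
    (hA : t - r < n) (hB : n - (t - r + 1) < n) (v : Fin 2 × Fin n)
    (hvA : (slantGraph n).dist v (1, ⟨t - r, hA⟩) ≤ t - 1)
    (hvB : (slantGraph n).dist v (0, ⟨n - (t - r + 1), hB⟩) ≤ t - 1) :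
    (t - (slantGraph n).dist v (1, ⟨t - r, hA⟩))
      + (t - (slantGraph n).dist v (0, ⟨n - (t - r + 1), hB⟩)) = r := by
  obtain ⟨⟨a, ha⟩, i, hi⟩ := v
  simp only [dist_eq_slantDist, slantDist, col, height] at hvA hvB ⊢
  omega

theorem not_isBroadcastDominating_singleton {t r : ℕ} (hr : 0 < r) (hn : 2 * (t - r) + 1 < n)
    (w : Fin 2 × Fin n) : ¬ (slantGraph n).IsBroadcastDominating t r {w} := by
  intro h
  have h₀ := h (w.1, ⟨0, by omega⟩)
  have h₁ := h (w.1, ⟨n - 1, by omega⟩)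
  simp only [Finset.sum_singleton, dist_eq_slantDist, slantDist, col, height] at h₀ h₁
  omega

theorem two_le_card_of_isBroadcastDominating {t r : ℕ} (hr : 0 < r) (hn : 2 * (t - r) + 1 < n)
    {T : Finset (Fin 2 × Fin n)} (hT : (slantGraph n).IsBroadcastDominating t r T) :
    2 ≤ T.card := by
  have : Nonempty (Fin 2 × Fin n) := ⟨(0, ⟨0, by omega⟩)⟩
  by_contra! hT₁
  obtain ⟨w, hw⟩ := Finset.card_le_one_iff_subset_singleton.mp (Nat.le_of_lt_succ hT₁)
  exact not_isBroadcastDominating_singleton hr hn w (hT.mono hw)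

end SlantGrid

/-- For t > r ≥ 1 and n = 4t - 3r, the 2 × n slant grid graph has (t,r) broadcast
domination number 2, witnessed by towers in the top row, column t-r+1 (1-based) and
the bottom row, column n-(t-r+1)+1 (1-based): every vertex receives signal ≥ r and
every vertex covered by both towers receives signal exactly r. -/
theorem slant_2xn_starting_block (n t r : ℕ) (hr : 1 ≤ r) (hrt : r < t)
    (hn : n = 4 * t - 3 * r) :
    sInf {k : ℕ | ∃ T : Finset (Fin 2 × Fin n), T.card = k ∧
        ∀ v, r ≤ ∑ w ∈ T, (t - (slantGraph n).dist v w)} = 2 ∧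
    ∃ T : Finset (Fin 2 × Fin n),
      T = {((1 : Fin 2), (⟨t - r, by omega⟩ : Fin n)),
           ((0 : Fin 2), (⟨n - (t - r + 1), by omega⟩ : Fin n))} ∧
      (∀ v, r ≤ ∑ w ∈ T, (t - (slantGraph n).dist v w)) ∧
      (∀ v, (∀ w ∈ T, (slantGraph n).dist v w ≤ t - 1) →
        ∑ w ∈ T, (t - (slantGraph n).dist v w) = r) := by
  have hA : t - r < n := by omega
  have hB : n - (t - r + 1) < n := by omega
  have hAB : ((1 : Fin 2), (⟨t - r, hA⟩ : Fin n)) ≠ (0, ⟨n - (t - r + 1), hB⟩) := by simp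
  have hdom : (slantGraph n).IsBroadcastDominating t r
      {(1, ⟨t - r, hA⟩), (0, ⟨n - (t - r + 1), hB⟩)} := fun v => by
    rw [Finset.sum_pair hAB]
    exact SlantGrid.le_tsub_dist_add_tsub_dist hn hA hB v
  refine ⟨IsLeast.csInf_eq ⟨⟨_, Finset.card_pair hAB, hdom⟩, ?_⟩, _, rfl, hdom, fun v hv => ?_⟩
  · rintro k ⟨T, rfl, hT⟩
    exact SlantGrid.two_le_card_of_isBroadcastDominating hr (by omega) hT
  · rw [Finset.sum_pair hAB]
    exact SlantGrid.tsub_dist_add_tsub_dist_eq hrt.le hn hA hB v (hv _ (by simp)) (hv _ (by simp))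
end

section
/- For a cycle C_n on n vertices with n ≥ 3 and t ≥ r ≥ 1, the (t,r) broadcast domination number satisfies γ_{t,r}(C_n) ≤ ⌈(n + r - 1)/(2t - r)⌉. -/
/-- For n ≥ 3 and t ≥ r ≥ 1, the (t,r) broadcast domination number of the cycle on
n vertices is at most ⌈(n + r - 1)/(2t - r)⌉. Vertices are ℤ/nℤ and the cycle
distance is min(|i-j|, n - |i-j|). -/
theorem cycle_domination_upper_bound (n t r : ℕ) (hn : 3 ≤ n) (hr : 1 ≤ r)
    (htr : r ≤ t) :
    sInf {k : ℕ | ∃ T : Finset (ZMod n), T.card = k ∧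
        ∀ v : ZMod n, r ≤ ∑ w ∈ T,
          (t - min (((v.val : ℤ) - (w.val : ℤ)).natAbs)
                   (n - ((v.val : ℤ) - (w.val : ℤ)).natAbs))} ≤
      (n + r - 1 + (2 * t - r) - 1) / (2 * t - r) := by
  haveI : NeZero n := ⟨by omega⟩
  set s := 2 * t - r with hs
  have hs0 : 0 < s := by omega
  set k := (n + r - 1 + s - 1) / s with hkdef
  have hn0 : 0 < n := by omega
  have hks : n + r - 1 ≤ k * s := by
    have h2 := Nat.mod_lt (n + r - 1 + s - 1) hs0
    have h1 := Nat.div_add_mod (n + r - 1 + s - 1) s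
    have h3 : k * s = s * ((n + r - 1 + s - 1) / s) := by rw [hkdef, mul_comm]
    omega
  have hk0 : 0 < k := by
    rcases Nat.eq_zero_or_pos k with h | h
    · rw [h, zero_mul] at hks; omega
    · exact h
  have hkn : k ≤ n := by
    have h1 : k * s ≤ n + r - 1 + s - 1 := by rw [hkdef]; exact Nat.div_mul_le_self _ _
    have h2 : n + 2 * s ≤ n * s + 2 := by
      have ha : 2 * (s - 1) ≤ n * (s - 1) :=
        Nat.mul_le_mul_right _ (by omega)
      have hb : n * (s - 1) = n * s - n * 1 := Nat.mul_sub n s 1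
      have hc : n * 1 ≤ n * s := Nat.mul_le_mul_left n hs0
      omega
    have h3 : k * s ≤ n * s := by omega
    exact Nat.le_of_mul_le_mul_right h3 hs0
  have hplt : ∀ j, j < k → j * n / k < n := by
    intro j hj
    rw [Nat.div_lt_iff_lt_mul hk0]
    calc j * n < k * n := (Nat.mul_lt_mul_right hn0).mpr hj
      _ = n * k := mul_comm _ _
  have hstep : ∀ j, j * n / k + 1 ≤ (j + 1) * n / k := by
    intro j
    have h1 : j * n / k + k / k ≤ (j * n + k) / k := by
      rw [Nat.le_div_iff_mul_le hk0, add_mul]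
      exact Nat.add_le_add (Nat.div_mul_le_self _ _) (Nat.div_mul_le_self _ _)
    rw [Nat.div_self hk0] at h1
    refine h1.trans (Nat.div_le_div_right ?_)
    rw [add_one_mul]
    exact Nat.add_le_add_left hkn _
  have hgapstep : ∀ j, (j + 1) * n / k ≤ j * n / k + s := by
    intro j
    have hnk : n ≤ s * k := by
      have h1 : n ≤ k * s := le_trans (by omega) hks
      rwa [mul_comm] at h1
    have h2 : (j + 1) * n ≤ j * n + s * k := by
      rw [add_one_mul]; exact Nat.add_le_add_left hnk _
    calc (j + 1) * n / k ≤ (j * n + s * k) / k := Nat.div_le_div_right h2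
      _ = j * n / k + s := Nat.add_mul_div_right _ _ hk0
  have key : ∃ T : Finset (ZMod n), T.card ≤ k ∧
      ∀ v : ZMod n, r ≤ ∑ w ∈ T,
        (t - min (((v.val : ℤ) - (w.val : ℤ)).natAbs)
                 (n - ((v.val : ℤ) - (w.val : ℤ)).natAbs)) := by
    by_cases hk1 : k = 1
    · refine ⟨{0}, by simp [hk1], ?_⟩
      intro v
      have hv : v.val < n := ZMod.val_lt v
      have hsge : n + r - 1 ≤ s := by
        have := hks; rw [hk1, one_mul] at this; exact this
      rw [Finset.sum_singleton, ZMod.val_zero]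
      omega
    · have hk2 : 2 ≤ k := by omega
      refine ⟨(Finset.range k).image (fun j => ((j * n / k : ℕ) : ZMod n)),
        le_trans Finset.card_image_le (by rw [Finset.card_range]), ?_⟩
      intro v
      have hv : v.val < n := ZMod.val_lt v
      set m := v.val with hm
      set i := m * k / n with hidef
      have hik : i < k := by
        rw [hidef, Nat.div_lt_iff_lt_mul hn0]
        calc m * k < n * k := (Nat.mul_lt_mul_right hk0).mpr hv
          _ = k * n := mul_comm _ _
      have hpim : i * n / k ≤ m := by
        have h1 : i * n ≤ m * k := by
          calc i * n = m * k / n * n := by rw [hidef]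
            _ ≤ m * k := Nat.div_mul_le_self _ _
        calc i * n / k ≤ m * k / k := Nat.div_le_div_right h1
          _ = m := Nat.mul_div_cancel m hk0
      have hmq : m * k < (i + 1) * n := by
        have h1 : n * (m * k / n) + m * k % n = m * k := Nat.div_add_mod _ _
        have h2 : m * k % n < n := Nat.mod_lt _ hn0
        calc m * k = n * i + m * k % n := by rw [hidef]; exact h1.symm
          _ < n * i + n := Nat.add_lt_add_left h2 _
          _ = (i + 1) * n := by ring
      have hmple : m ≤ (i + 1) * n / k := by
        rw [Nat.le_div_iff_mul_le hk0]
        exact le_of_lt hmq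
      by_cases hi1 : i + 1 < k
      · -- two towers at positions i*n/k and (i+1)*n/k
        have e1 : (((i * n / k : ℕ) : ZMod n)).val = i * n / k :=
          ZMod.val_natCast_of_lt (hplt i hik)
        have e2 : ((((i + 1) * n / k : ℕ) : ZMod n)).val = (i + 1) * n / k :=
          ZMod.val_natCast_of_lt (hplt (i + 1) hi1)
        have hne : (((i * n / k : ℕ) : ZMod n)) ≠ ((((i + 1) * n / k : ℕ) : ZMod n)) := by
          intro h
          rw [h] at e1
          have := hstep i
          omega
        have hsub : ({(((i * n / k : ℕ) : ZMod n)), ((((i + 1) * n / k : ℕ) : ZMod n))} :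
            Finset (ZMod n)) ⊆ (Finset.range k).image (fun j => ((j * n / k : ℕ) : ZMod n)) := by
          intro w hw
          rcases Finset.mem_insert.mp hw with h | h
          · exact Finset.mem_image.mpr ⟨i, Finset.mem_range.mpr hik, h.symm⟩
          · exact Finset.mem_image.mpr ⟨i + 1, Finset.mem_range.mpr hi1,
              (Finset.mem_singleton.mp h).symm⟩
        refine le_trans ?_ (Finset.sum_le_sum_of_subset hsub)
        rw [Finset.sum_pair hne, e1, e2]
        have := hgapstep i
        omega
      · -- towers at i*n/k and 0
        have hik1 : i + 1 = k := by omega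
        have e1 : (((i * n / k : ℕ) : ZMod n)).val = i * n / k :=
          ZMod.val_natCast_of_lt (hplt i hik)
        have hp1 : 1 ≤ i * n / k := by
          have h1 : n ≤ i * n := by
            calc n = 1 * n := (one_mul n).symm
              _ ≤ i * n := Nat.mul_le_mul_right n (by omega)
          calc 1 ≤ n / k := (Nat.one_le_div_iff hk0).mpr hkn
            _ ≤ i * n / k := Nat.div_le_div_right h1
        have hne : (((i * n / k : ℕ) : ZMod n)) ≠ (0 : ZMod n) := by
          intro h
          rw [h, ZMod.val_zero] at e1
          omega
        have hgap2 : n ≤ i * n / k + s := by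
          by_cases hns : n ≤ s
          · omega
          · have hsk' : n ≤ s * k := by
              have h1 : n ≤ k * s := le_trans (by omega) hks
              rwa [mul_comm] at h1
            have h2 : i * n = k * n - n := by
              rw [← hik1, add_one_mul, Nat.add_sub_cancel]
            have h3 : (n - s) * k ≤ k * n - n := by
              rw [Nat.sub_mul, mul_comm n k]
              exact Nat.sub_le_sub_left hsk' _
            have h1 : (n - s) * k ≤ i * n := by rw [h2]; exact h3
            have h4 : n - s ≤ i * n / k := by
              rw [Nat.le_div_iff_mul_le hk0]; exact h1
            omega
        have hsub : ({(((i * n / k : ℕ) : ZMod n)), (0 : ZMod n)} :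
            Finset (ZMod n)) ⊆ (Finset.range k).image (fun j => ((j * n / k : ℕ) : ZMod n)) := by
          intro w hw
          rcases Finset.mem_insert.mp hw with h | h
          · exact Finset.mem_image.mpr ⟨i, Finset.mem_range.mpr hik, h.symm⟩
          · refine Finset.mem_image.mpr ⟨0, Finset.mem_range.mpr hk0, ?_⟩
            rw [(Finset.mem_singleton.mp h)]
            norm_num
        refine le_trans ?_ (Finset.sum_le_sum_of_subset hsub)
        rw [Finset.sum_pair hne, e1, ZMod.val_zero]
        omega
  obtain ⟨T, hcard, hdom⟩ := key
  exact le_trans (Nat.sInf_le ⟨T, rfl, hdom⟩) hcard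
end
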